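/- Every hedonic coalitional game on a finite nonempty player set N admits at least one Nash-stable partition, i.e., a partition of N from which no admissible join operation can be performed. -/
import Mathlib


open Finset

variable {ι : Type*}

/-- A partition of the finite player set: pairwise disjoint nonempty coalitions covering everyone. -/
def IsPartition [DecidableEq ι] [Fintype ι] (P : Finset (Finset ι)) : Prop :=
  (∀ S ∈ P, S.Nonempty) ∧
  (∀ S ∈ P, ∀ T ∈ P, S ≠ T → Disjoint S T) ∧
  P.biUnion id = Finset.univ

/-- The value of a coalition: v(S) = ∑_{j ∈ S} φ_j(S). -/
def coalitionValue (φ : Finset ι → ι → ℝ) (S : Finset ι) : ℝ := ∑ j ∈ S, φ S j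

/-- Total social welfare of a partition: W(Π) = ∑_{S ∈ Π} v(S). -/
def welfare (φ : Finset ι → ι → ℝ) (P : Finset (Finset ι)) : ℝ :=
  ∑ S ∈ P, coalitionValue φ S

/-- `JoinStep φ P P'` : the partition `P'` results from `P` by an admissible join operation:
a player `i` moves from its coalition `Sm ∈ P` to a coalition `Sk ∈ P ∪ {∅}`, `Sk ≠ Sm`,
with `v(Sk ∪ {i}) + v(Sm \ {i}) > v(Sk) + v(Sm)`; empty sets are removed from the result. -/
def JoinStep [DecidableEq ι] (φ : Finset ι → ι → ℝ) (P P' : Finset (Finset ι)) : Prop :=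
  ∃ (i : ι) (Sm Sk : Finset ι),
    Sm ∈ P ∧ i ∈ Sm ∧ (Sk ∈ P ∨ Sk = ∅) ∧ Sk ≠ Sm ∧
    coalitionValue φ Sk + coalitionValue φ Sm <
      coalitionValue φ (insert i Sk) + coalitionValue φ (Sm.erase i) ∧
    P' = ((P \ {Sm, Sk}) ∪ {Sm.erase i, insert i Sk}).erase ∅

lemma coalitionValue_empty (φ : Finset ι → ι → ℝ) : coalitionValue φ (∅ : Finset ι) = 0 := by
  simp [coalitionValue]

lemma joinStep_aux [DecidableEq ι] [Fintype ι] (φ : Finset ι → ι → ℝ)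
    {P P' : Finset (Finset ι)} (hP : IsPartition P) (h : JoinStep φ P P') :
    IsPartition P' ∧ welfare φ P < welfare φ P' := by
  obtain ⟨hne, hdisj, hcov⟩ := hP
  obtain ⟨i, Sm, Sk, hSm, hiSm, hSk, hkm, hlt, hP'⟩ := h
  have hempty : (∅ : Finset ι) ∉ P := fun h => by
    simpa using hne _ h
  have hSkP : Sk ∈ P ∨ Sk = ∅ := hSk
  -- basic disjointness facts
  have hdSkSm : Disjoint Sk Sm := by
    rcases hSkP with h | h
    · exact hdisj _ h _ hSm hkm
    · simp [h]
  have hiSk : i ∉ Sk := fun h => (Finset.disjoint_left.mp hdSkSm h) hiSm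
  set e1 := Sm.erase i with he1
  set e2 := insert i Sk with he2
  have he12 : e1 ≠ e2 := by
    intro h
    have hi2 : i ∈ e2 := Finset.mem_insert_self i Sk
    rw [← h] at hi2
    exact Finset.notMem_erase i Sm hi2
  have he2P : ∀ T ∈ P, T ≠ Sm → T ≠ e2 := by
    intro T hT hTSm hTe
    have : i ∈ T := hTe ▸ Finset.mem_insert_self i Sk
    exact (Finset.disjoint_left.mp (hdisj _ hT _ hSm hTSm) this) hiSm
  have he1P : ∀ T ∈ P, T ≠ Sm → T ≠ e1 := by
    intro T hT hTSm hTe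
    obtain ⟨x, hx⟩ := hne _ hT
    have hxSm : x ∈ Sm := Finset.mem_of_mem_erase (hTe ▸ hx)
    exact Finset.disjoint_left.mp (hdisj _ hT _ hSm hTSm) hx hxSm
  have hmemP' : ∀ S, S ∈ P' ↔ (S ≠ ∅ ∧ ((S ∈ P ∧ S ≠ Sm ∧ S ≠ Sk) ∨ S = e1 ∨ S = e2)) := by
    intro S
    subst hP'
    simp only [Finset.mem_erase, Finset.mem_union, Finset.mem_sdiff, Finset.mem_insert,
      Finset.mem_singleton]
    tauto
  -- P' is a partition
  have hpart : IsPartition P' := by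
    refine ⟨?_, ?_, ?_⟩
    · intro S hS
      exact Finset.nonempty_iff_ne_empty.mpr ((hmemP' S).mp hS).1
    · intro S hS T hT hST
      obtain ⟨hS0, hScases⟩ := (hmemP' S).mp hS
      obtain ⟨hT0, hTcases⟩ := (hmemP' T).mp hT
      have key : ∀ A B, A ≠ ∅ → ((A ∈ P ∧ A ≠ Sm ∧ A ≠ Sk) ∨ A = e1 ∨ A = e2) →
          ((B ∈ P ∧ B ≠ Sm ∧ B ≠ Sk) ∨ B = e1 ∨ B = e2) → A ≠ B → Disjoint A B := by
        intro A B hA0 hAc hBc hAB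
        rcases hAc with ⟨hA, hASm, hASk⟩ | hA | hA
        · rcases hBc with ⟨hB, hBSm, hBSk⟩ | hB | hB
          · exact hdisj _ hA _ hB hAB
          · exact hB ▸ Finset.disjoint_of_subset_right (Finset.erase_subset i Sm)
              (hdisj _ hA _ hSm hASm)
          · subst hB
            rw [he2, Finset.disjoint_insert_right]
            refine ⟨fun h => Finset.disjoint_left.mp (hdisj _ hA _ hSm hASm) h hiSm, ?_⟩
            rcases hSkP with h | h
            · exact hdisj _ hA _ h hASk
            · simp [h]
          -- remaining: A = e1 or A = e2
        · subst hA
          rcases hBc with ⟨hB, hBSm, hBSk⟩ | hB | hB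
          · exact (Finset.disjoint_of_subset_right (Finset.erase_subset i Sm)
              (hdisj _ hB _ hSm hBSm)).symm
          · exact absurd (hB ▸ rfl) hAB
          · subst hB
            rw [he1, he2, Finset.disjoint_insert_right]
            exact ⟨Finset.notMem_erase i Sm,
              (Finset.disjoint_of_subset_right (Finset.erase_subset i Sm) hdSkSm).symm⟩
        · subst hA
          rcases hBc with ⟨hB, hBSm, hBSk⟩ | hB | hB
          · rw [he2, Finset.disjoint_insert_left]
            refine ⟨fun h => Finset.disjoint_left.mp (hdisj _ hB _ hSm hBSm) h hiSm, ?_⟩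
            rcases hSkP with h | h
            · exact (hdisj _ hB _ h hBSk).symm
            · simp [h]
          · subst hB
            rw [he1, he2, Finset.disjoint_insert_left]
            exact ⟨Finset.notMem_erase i Sm,
              Finset.disjoint_of_subset_right (Finset.erase_subset i Sm) hdSkSm⟩
          · exact absurd (hB ▸ rfl) hAB
      exact key S T hS0 hScases hTcases hST
    · apply Finset.eq_univ_of_forall
      intro j
      rw [Finset.mem_biUnion]
      have hj : j ∈ P.biUnion id := hcov ▸ Finset.mem_univ j
      rw [Finset.mem_biUnion] at hj
      obtain ⟨T, hT, hjT⟩ := hj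
      by_cases hji : j = i
      · subst hji
        refine ⟨e2, ?_, Finset.mem_insert_self j Sk⟩
        rw [hmemP']
        exact ⟨Finset.nonempty_iff_ne_empty.mp ⟨j, Finset.mem_insert_self j Sk⟩,
          Or.inr (Or.inr rfl)⟩
      · by_cases hTSm : T = Sm
        · subst hTSm
          have hje1 : j ∈ e1 := Finset.mem_erase.mpr ⟨hji, hjT⟩
          refine ⟨e1, ?_, hje1⟩
          rw [hmemP']
          exact ⟨Finset.nonempty_iff_ne_empty.mp ⟨j, hje1⟩, Or.inr (Or.inl rfl)⟩
        · by_cases hTSk : T = Sk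
          · subst hTSk
            have hje2 : j ∈ e2 := Finset.mem_insert_of_mem hjT
            refine ⟨e2, ?_, hje2⟩
            rw [hmemP']
            exact ⟨Finset.nonempty_iff_ne_empty.mp ⟨j, hje2⟩, Or.inr (Or.inr rfl)⟩
          · refine ⟨T, ?_, hjT⟩
            rw [hmemP']
            exact ⟨Finset.nonempty_iff_ne_empty.mp (hne _ hT), Or.inl ⟨hT, hTSm, hTSk⟩⟩
  -- welfare computation
  have hwelf : welfare φ P < welfare φ P' := by
    have hsdiff1 : e1 ∉ P \ {Sm, Sk} := by
      intro h
      rw [Finset.mem_sdiff, Finset.mem_insert, Finset.mem_singleton] at h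
      exact he1P _ h.1 (fun hh => h.2 (Or.inl hh)) rfl
    have hsdiff2 : e2 ∉ P \ {Sm, Sk} := by
      intro h
      rw [Finset.mem_sdiff, Finset.mem_insert, Finset.mem_singleton] at h
      exact he2P _ h.1 (fun hh => h.2 (Or.inl hh)) rfl
    have hdPair : Disjoint (P \ {Sm, Sk}) ({e1, e2} : Finset (Finset ι)) := by
      rw [Finset.disjoint_right]
      intro A hA
      rw [Finset.mem_insert, Finset.mem_singleton] at hA
      rcases hA with h | h <;> subst h
      · exact hsdiff1
      · exact hsdiff2
    have hP'w : welfare φ P' =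
        (∑ S ∈ P \ {Sm, Sk}, coalitionValue φ S) + (coalitionValue φ e1 + coalitionValue φ e2) := by
      rw [hP', welfare, Finset.sum_erase _ (coalitionValue_empty φ),
        Finset.sum_union hdPair, Finset.sum_pair he12]
    have hPw : welfare φ P ≤
        (∑ S ∈ P \ {Sm, Sk}, coalitionValue φ S) + (coalitionValue φ Sk + coalitionValue φ Sm) := by
      rcases hSkP with h | h
      · have hsub : ({Sm, Sk} : Finset (Finset ι)) ⊆ P := by
          intro A hA
          rw [Finset.mem_insert, Finset.mem_singleton] at hA
          rcases hA with h' | h' <;> subst h' <;> assumption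
        rw [welfare, ← Finset.sum_sdiff hsub, Finset.sum_pair (Ne.symm hkm)]
        apply le_of_eq
        ring
      · subst h
        have : P \ {Sm, ∅} = P.erase Sm := by
          ext A
          simp only [Finset.mem_sdiff, Finset.mem_insert, Finset.mem_singleton, Finset.mem_erase]
          constructor
          · rintro ⟨hA, hA2⟩; exact ⟨fun hh => hA2 (Or.inl hh), hA⟩
          · rintro ⟨hA1, hA2⟩
            refine ⟨hA2, ?_⟩
            rintro (hh | hh)
            · exact hA1 hh
            · subst hh; exact hempty hA2
        rw [welfare, this, coalitionValue_empty, ← Finset.add_sum_erase _ _ hSm]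
        apply le_of_eq
        ring
    calc welfare φ P ≤ _ := hPw
      _ < (∑ S ∈ P \ {Sm, Sk}, coalitionValue φ S) + (coalitionValue φ e2 + coalitionValue φ e1) :=
        by linarith
      _ = welfare φ P' := by rw [hP'w]; ring
  exact ⟨hpart, hwelf⟩

/-- Every hedonic coalitional game on a finite nonempty player set admits at least one
Nash-stable partition. -/
theorem exists_nash_stable [DecidableEq ι] [Fintype ι] [Nonempty ι]
    (φ : Finset ι → ι → ℝ) :
    ∃ P : Finset (Finset ι), IsPartition P ∧ ∀ P', ¬ JoinStep φ P P' := by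
  classical
  have huniv : IsPartition ({Finset.univ} : Finset (Finset ι)) := by
    refine ⟨?_, ?_, ?_⟩
    · intro S hS
      rw [Finset.mem_singleton] at hS
      subst hS
      exact Finset.univ_nonempty
    · intro S hS T hT hST
      rw [Finset.mem_singleton] at hS hT
      exact absurd (hS.trans hT.symm) hST
    · simp
  set s : Finset (Finset (Finset ι)) := Finset.univ.filter (fun Q => IsPartition Q) with hs
  have hsne : s.Nonempty := ⟨{Finset.univ}, by simp [hs, huniv]⟩
  obtain ⟨P, hPs, hmax⟩ := s.exists_max_image (welfare φ) hsne
  have hPpart : IsPartition P := by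
    rw [hs, Finset.mem_filter] at hPs
    exact hPs.2
  refine ⟨P, hPpart, fun P' hstep => ?_⟩
  obtain ⟨hP'part, hlt⟩ := joinStep_aux φ hPpart hstep
  have : welfare φ P' ≤ welfare φ P := hmax P' (by simp [hs, hP'part])
  linarith
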